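/- arXiv:0803.2901 — 3 statements merged into one kernel-verified Lean document; each statement's English description precedes it below -/
import Mathlib

section
/- Let k ∈ {1, 2, 3, 4} and let n ≥ 2k. If μ and λ are partitions of n that both have first part equal to n−k, and μ < λ in lexicographic order, then |η_μ| ≤ |η_λ|; moreover the inequality is strict whenever n ≥ 7. (Thus among the partitions of n with first part n−1, n−2, n−3 or n−4, the absolute values of the eigenvalues decrease in lexicographic order.) -/
/-- Derangement numbers: `D 0 = 1`, `D (m+1) = (m+1) * D m + (-1)^(m+1)`. -/
def derange : ℕ → ℤ
  | 0 => 1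
  | n + 1 => (n + 1 : ℤ) * derange n + (-1) ^ (n + 1)

/-- Subtract one from every part and discard the parts that become zero
(deleting the first column of the Ferrers diagram). -/
def strip (l : List ℕ) : List ℕ := (l.map (· - 1)).filter (fun x => 0 < x)

lemma strip_measure (l : List ℕ) : (strip l).sum + (strip l).length ≤ l.sum := by
  induction l with
  | nil => simp [strip]
  | cons x t ih =>
      simp only [strip, List.map_cons, List.filter_cons] at ih ⊢
      by_cases hx : 0 < x - 1 <;> simp [hx] <;> omega

/-- The eigenvalues of the derangement graph, defined by Renteln's recurrence:
`η ∅ = 1` and `η λ = (-1)^h (η (λ-ĥ) + (-1)^{λ₁} h η (λ-ĉ))`, where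
`h = λ₁ + r - 1` is the hook size, `λ-ĥ = strip (tail λ)` removes the hook,
and `λ-ĉ = strip λ` removes the first column. -/
def eta : List ℕ → ℤ
  | [] => 1
  | a :: t =>
      (-1) ^ (a + t.length) *
        (eta (strip t) + (-1) ^ a * ((a : ℤ) + t.length) * eta (strip (a :: t)))
  termination_by l => l.sum + l.length
  decreasing_by
  · have h1 := strip_measure t
    simp only [List.sum_cons, List.length_cons]
    omega
  · have h1 := strip_measure (a :: t)
    simp only [List.sum_cons, List.length_cons] at h1 ⊢
    omega

/-- `l` is (the list of parts of) a partition of `n`: weakly decreasing,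
all parts positive, summing to `n`. -/
def IsPartition (n : ℕ) (l : List ℕ) : Prop :=
  l.Pairwise (· ≥ ·) ∧ (∀ x ∈ l, 0 < x) ∧ l.sum = n

/-- The hook partition `(a, 1^(n-a))` of `n`. -/
def hookP (n a : ℕ) : List ℕ := a :: List.replicate (n - a) 1

/-!
Write the first part as `a + k`, so that the rest of the partition is a partition `t` of `k ≤ 4`.
Unwinding Renteln's recurrence (deleting the first column only lowers the first part, removing the
hook leaves a partition of size at most 3) gives, for each of the finitely many tails `t`,
`(-1)^k η_(a+k, t) = D_(a+k) + k D_(a+k-1) + c₂ D_(a+k-2) + c₃ D_(a+k-3) + c₄ D_(a+k-4)`,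
where `D = numDerangements` and the coefficients `cᵢ ≥ 0` increase along the lexicographic
order, `c₂` strictly. As `D_m > 0` for `m ≠ 1`, the absolute values increase strictly unless
the first part is `3`, which `n ≥ 7` rules out.
-/

theorem numDerangements_pos {m : ℕ} (hm : m ≠ 1) : 0 < numDerangements m := by
  induction m using Nat.twoStepInduction with
  | zero => decide
  | one => exact absurd rfl hm
  | more m ih₀ ih₁ =>
    have hsum : 0 < numDerangements m + numDerangements (m + 1) := by
      rcases eq_or_ne m 1 with rfl | h
      · exact Nat.add_pos_right _ (ih₁ (by omega))
      · exact Nat.add_pos_left (ih₀ h) _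
    rw [numDerangements_add_two]
    positivity

theorem List.Pairwise.rel_of_mem_of_pairwise {α : Type*} {R S : α → α → Prop} [Std.Asymm R]
    {l : List α} (hR : l.Pairwise R) (hS : l.Pairwise S) {x y : α} (hx : x ∈ l) (hy : y ∈ l)
    (hxy : R x y) : S x y := by
  induction l with
  | nil => simp at hx
  | cons z l ih =>
    rw [List.pairwise_cons] at hR hS
    rcases List.mem_cons.1 hx with rfl | hxl <;> rcases List.mem_cons.1 hy with rfl | hyl
    · exact absurd hxy (asymm hxy)
    · exact hS.1 y hyl
    · exact absurd (hR.1 x hxl) (asymm hxy)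
    · exact ih hR.2 hS.2 hxl hyl

theorem IsPartition.eq_cons {n p : ℕ} {l : List ℕ} (hl : IsPartition n l) (hhead : l.headI = p)
    (hp : 0 < p) : ∃ t, l = p :: t ∧ IsPartition (n - p) t := by
  obtain ⟨hsorted, hpos, hsum⟩ := hl
  cases l with
  | nil => exact absurd hhead hp.ne
  | cons x t =>
    obtain rfl : x = p := hhead
    refine ⟨t, rfl, hsorted.of_cons, fun y hy => hpos y (List.mem_cons_of_mem _ hy), ?_⟩
    simp only [List.sum_cons] at hsum
    omega

theorem strip_cons_succ {p : ℕ} (hp : 0 < p) (t : List ℕ) :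
    strip ((p + 1) :: t) = p :: strip t := by
  simp [strip, hp]

theorem strip_replicate_one (k : ℕ) : strip (List.replicate k 1) = [] := by
  simp [strip]

theorem strip_nil : strip [] = [] := rfl

theorem eta_nil : eta [] = 1 := eta.eq_1

theorem eta_cons_succ {p : ℕ} (hp : 0 < p) (t : List ℕ) :
    eta ((p + 1) :: t) = (-1) ^ (p + 1 + t.length) * eta (strip t)
      + (-1) ^ t.length * ((p : ℤ) + 1 + t.length) * eta (p :: strip t) := by
  have hsign : ((-1 : ℤ)) ^ (p + 1 + t.length) * (-1) ^ (p + 1) = (-1) ^ t.length := by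
    rw [← pow_add, show p + 1 + t.length + (p + 1) = t.length + 2 * (p + 1) by ring, pow_add,
      pow_mul]
    norm_num
  rw [eta.eq_2, strip_cons_succ hp]
  push_cast
  linear_combination ((p + 1 + t.length : ℤ) * eta (p :: strip t)) * hsign

theorem eta_singleton (p : ℕ) : eta [p] = numDerangements p := by
  rcases p with _ | p
  · simp [eta.eq_2, strip, eta_nil]
  induction p with
  | zero => simp [eta.eq_2, strip, eta_nil]
  | succ p ih =>
    rw [eta_cons_succ (by omega : 0 < p + 1), strip_nil, ih, eta_nil, List.length_nil,
      numDerangements_succ (p + 1)]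
    push_cast
    ring

theorem eta_hook (p k : ℕ) :
    eta ((p + 1) :: List.replicate k 1) =
      (-1) ^ k * ((numDerangements (p + 1) + k * numDerangements p : ℕ) : ℤ) := by
  rcases p.eq_zero_or_pos with rfl | hp
  · rw [eta.eq_2, ← List.replicate_succ, strip_replicate_one, strip_replicate_one, eta_nil]
    push_cast [List.length_replicate, numDerangements_one, numDerangements_zero]
    ring
  · rw [eta_cons_succ hp, strip_replicate_one, eta_singleton, eta_nil, List.length_replicate]
    push_cast
    rw [numDerangements_succ]
    ring

theorem eta_cons_two (a : ℕ) :
    eta [a + 2, 2] =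
      ((numDerangements (a + 2) + 2 * numDerangements (a + 1)
        + 2 * numDerangements a : ℕ) : ℤ) := by
  rw [eta_cons_succ (by omega : 0 < a + 1), show strip [2] = [1] from rfl, eta_singleton,
    show [a + 1, 1] = (a + 1) :: List.replicate 1 1 from rfl, eta_hook]
  push_cast [List.length_cons, List.length_nil, numDerangements_succ, numDerangements_zero]
  ring

theorem eta_cons_two_one (a : ℕ) :
    eta [a + 3, 2, 1] =
      -((numDerangements (a + 3) + 3 * numDerangements (a + 2)
        + 3 * numDerangements (a + 1) : ℕ) : ℤ) := by
  rw [eta_cons_succ (by omega : 0 < a + 2), show strip [2, 1] = [1] from rfl, eta_singleton,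
    show [a + 2, 1] = (a + 1 + 1) :: List.replicate 1 1 from rfl, eta_hook]
  push_cast [List.length_cons, List.length_nil, numDerangements_succ, numDerangements_zero]
  ring

theorem eta_cons_three (a : ℕ) :
    eta [a + 3, 3] =
      -((numDerangements (a + 3) + 3 * numDerangements (a + 2) + 6 * numDerangements (a + 1)
        + 6 * numDerangements a : ℕ) : ℤ) := by
  rw [eta_cons_succ (by omega : 0 < a + 2), show strip [3] = [2] from rfl, eta_singleton,
    eta_cons_two]
  push_cast [List.length_cons, List.length_nil, numDerangements_succ, numDerangements_zero]
  ring

theorem eta_cons_two_one_one (a : ℕ) :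
    eta [a + 4, 2, 1, 1] =
      ((numDerangements (a + 4) + 4 * numDerangements (a + 3)
        + 4 * numDerangements (a + 2) : ℕ) : ℤ) := by
  rw [eta_cons_succ (by omega : 0 < a + 3), show strip [2, 1, 1] = [1] from rfl, eta_singleton,
    show [a + 3, 1] = (a + 2 + 1) :: List.replicate 1 1 from rfl, eta_hook]
  push_cast [List.length_cons, List.length_nil, numDerangements_succ, numDerangements_zero]
  ring

theorem eta_cons_two_two (a : ℕ) :
    eta [a + 4, 2, 2] =
      ((numDerangements (a + 4) + 4 * numDerangements (a + 3)
        + 6 * numDerangements (a + 2) : ℕ) : ℤ) := by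
  have h11 : eta [1, 1] = -1 := by simpa using eta_hook 0 1
  rw [eta_cons_succ (by omega : 0 < a + 3), show strip [2, 2] = [1, 1] from rfl, h11,
    show [a + 3, 1, 1] = (a + 2 + 1) :: List.replicate 2 1 from rfl, eta_hook]
  push_cast [List.length_cons, List.length_nil, numDerangements_succ, numDerangements_zero]
  ring

theorem eta_cons_three_one (a : ℕ) :
    eta [a + 4, 3, 1] =
      ((numDerangements (a + 4) + 4 * numDerangements (a + 3) + 8 * numDerangements (a + 2)
        + 8 * numDerangements (a + 1) : ℕ) : ℤ) := by
  rw [eta_cons_succ (by omega : 0 < a + 3), show strip [3, 1] = [2] from rfl, eta_singleton,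
    show a + 3 = a + 1 + 2 from rfl, eta_cons_two]
  push_cast [List.length_cons, List.length_nil, numDerangements_succ, numDerangements_zero]
  ring

theorem eta_cons_four (a : ℕ) :
    eta [a + 4, 4] =
      ((numDerangements (a + 4) + 4 * numDerangements (a + 3) + 12 * numDerangements (a + 2)
        + 24 * numDerangements (a + 1) + 24 * numDerangements a : ℕ) : ℤ) := by
  rw [eta_cons_succ (by omega : 0 < a + 3), show strip [4] = [3] from rfl, eta_singleton,
    eta_cons_three]
  push_cast [List.length_cons, List.length_nil, numDerangements_succ, numDerangements_zero]
  ring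

/-- The partitions of `k ≤ 4` in increasing lexicographic order (`[]` for larger `k`). -/
def lexPartitions : ℕ → List (List ℕ)
  | 0 => [[]]
  | 1 => [[1]]
  | 2 => [[1, 1], [2]]
  | 3 => [[1, 1, 1], [2, 1], [3]]
  | 4 => [[1, 1, 1, 1], [2, 1, 1], [2, 2], [3, 1], [4]]
  | _ => []

theorem pairwise_lex_lexPartitions (k : ℕ) : (lexPartitions k).Pairwise (List.Lex (· < ·)) := by
  match k with
  | 0 | 1 | 2 | 3 | 4 => decide
  | _ + 5 => exact List.Pairwise.nil

theorem mem_lexPartitions {k : ℕ} {t : List ℕ} (hk : k ≤ 4) (ht : IsPartition k t) :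
    t ∈ lexPartitions k := by
  obtain ⟨hsorted, hpos, hsum⟩ := ht
  have hlen : t.length ≤ k := hsum ▸ List.length_le_sum_of_one_le t hpos
  match t with
  | [] | [x] | [x, y] | [x, y, z] | [x, y, z, w] =>
    interval_cases k <;> simp_all [lexPartitions] <;> omega
  | _ :: _ :: _ :: _ :: _ :: _ => simp only [List.length_cons] at hlen; omega

theorem pairwise_abs_eta (a : ℕ) {k : ℕ} (hk : k ≤ 4) :
    (lexPartitions k).Pairwise fun t u => |eta ((a + k) :: t)| ≤ |eta ((a + k) :: u)| ∧
      (a + k ≠ 3 → |eta ((a + k) :: t)| < |eta ((a + k) :: u)|) := by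
  interval_cases k
  · exact List.pairwise_singleton _ _
  · exact List.pairwise_singleton _ _
  · have h11 : eta [a + 2, 1, 1] =
        ((numDerangements (a + 2) + 2 * numDerangements (a + 1) : ℕ) : ℤ) := by
      simpa using eta_hook (a + 1) 2
    have hpos := @numDerangements_pos a
    simp only [lexPartitions, List.pairwise_cons, List.mem_cons, List.not_mem_nil, or_false,
      forall_eq, IsEmpty.forall_iff, implies_true, List.Pairwise.nil, and_true, h11, eta_cons_two,
      Nat.abs_cast, Nat.cast_le, Nat.cast_lt]
    omega
  · have h111 : eta [a + 3, 1, 1, 1] =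
        -((numDerangements (a + 3) + 3 * numDerangements (a + 2) : ℕ) : ℤ) := by
      simpa using eta_hook (a + 2) 3
    have hpos := @numDerangements_pos (a + 1)
    simp only [lexPartitions, List.pairwise_cons, List.mem_cons, List.not_mem_nil, or_false,
      forall_eq_or_imp, forall_eq, IsEmpty.forall_iff, implies_true, List.Pairwise.nil, and_true,
      h111, eta_cons_two_one, eta_cons_three, abs_neg, Nat.abs_cast, Nat.cast_le, Nat.cast_lt]
    omega
  · have h1111 : eta [a + 4, 1, 1, 1, 1] =
        ((numDerangements (a + 4) + 4 * numDerangements (a + 3) : ℕ) : ℤ) := by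
      simpa using eta_hook (a + 3) 4
    have hpos := @numDerangements_pos (a + 2)
    simp only [lexPartitions, List.pairwise_cons, List.mem_cons, List.not_mem_nil, or_false,
      forall_eq_or_imp, forall_eq, IsEmpty.forall_iff, implies_true, List.Pairwise.nil, and_true,
      h1111, eta_cons_two_one_one, eta_cons_two_two, eta_cons_three_one, eta_cons_four,
      Nat.abs_cast, Nat.cast_le, Nat.cast_lt]
    omega

/-- For `k ∈ {1,2,3,4}` and `n ≥ 2k`, among partitions of `n` with first part `n-k`,
the absolute values of the eigenvalues decrease in lexicographic order; strictly for
`n ≥ 7`. -/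
theorem eta_abs_monotone_lex (k n : ℕ) (hk1 : 1 ≤ k) (hk4 : k ≤ 4) (hn : 2 * k ≤ n)
    (m l : List ℕ) (hm : IsPartition n m) (hl : IsPartition n l)
    (hm1 : m.headI = n - k) (hl1 : l.headI = n - k)
    (hlex : List.Lex (· < ·) m l) :
    |eta m| ≤ |eta l| ∧ (7 ≤ n → |eta m| < |eta l|) := by
  obtain ⟨t, rfl, ht⟩ := hm.eq_cons hm1 (by omega)
  obtain ⟨u, rfl, hu⟩ := hl.eq_cons hl1 (by omega)
  obtain ⟨a, rfl⟩ : ∃ a, n = a + 2 * k := ⟨n - 2 * k, by omega⟩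
  rw [show a + 2 * k - (a + 2 * k - k) = k by omega] at ht hu
  rw [show a + 2 * k - k = a + k by omega] at hlex ⊢
  have key := (pairwise_lex_lexPartitions k).rel_of_mem_of_pairwise (pairwise_abs_eta a hk4)
    (mem_lexPartitions hk4 ht) (mem_lexPartitions hk4 hu) (List.lex_cons_iff.1 hlex)
  exact ⟨key.1, fun h7 => key.2 (by omega)⟩
end

section
/- Let λ = (λ_1, …, λ_r) be a partition of n. For 1 ≤ i ≤ λ_1, let h_i denote the hook size of the partition obtained from λ by deleting its first i−1 columns; explicitly, h_i = (λ_1 − i + 1) + #{j : λ_j ≥ i} − 1. Then |η_λ| ≤ ∏_{i=1}^{λ_1} (h_i + 1). -/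
/-! Expanding Renteln's recurrence gives `|η λ| ≤ |η (λ-ĥ)| + h |η (λ-ĉ)|`. The hook product `P`
satisfies `P λ = (h + 1) P (λ-ĉ)`, because the hook sizes of `λ-ĉ` are `h₂, h₃, …`; and since
`λ-ĉ` is `λ-ĥ` with the row `λ₁ - 1` put on top, `P (λ-ĥ) ≤ P (λ-ĉ)`. By induction,
`|η λ| ≤ P (λ-ĉ) + h P (λ-ĉ) = P λ`. -/

lemma strip_cons_of_le_one {a : ℕ} (t : List ℕ) (ha : a ≤ 1) : strip (a :: t) = strip t := by
  simp [strip, show a - 1 = 0 by omega]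

lemma strip_cons_of_one_lt {a : ℕ} (t : List ℕ) (ha : 1 < a) :
    strip (a :: t) = (a - 1) :: strip t := by
  simp [strip, show 0 < a - 1 by omega]

lemma pos_of_mem_strip {l : List ℕ} {x : ℕ} (hx : x ∈ strip l) : 0 < x := by
  simp only [strip, List.mem_filter, decide_eq_true_eq] at hx
  exact hx.2

lemma pairwise_ge_strip {l : List ℕ} (hl : l.Pairwise (· ≥ ·)) : (strip l).Pairwise (· ≥ ·) :=
  (List.pairwise_map.2 (hl.imp fun hab => Nat.sub_le_sub_right hab 1)).filter _

lemma headI_strip {l : List ℕ} (hl : l.Pairwise (· ≥ ·)) : (strip l).headI = l.headI - 1 := by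
  cases l with
  | nil => rfl
  | cons a t =>
    rcases Nat.lt_or_ge 1 a with ha | ha
    · rw [strip_cons_of_one_lt t ha]; rfl
    · have ht : strip t = [] := by
        simp only [strip, List.filter_eq_nil_iff, List.mem_map]
        rintro _ ⟨x, hx, rfl⟩
        have := (List.pairwise_cons.1 hl).1 x hx
        simp only [tsub_pos_iff_lt, decide_eq_true_eq, not_lt]
        omega
      rw [strip_cons_of_le_one t ha, ht, List.headI_nil, List.headI_cons, Nat.default_eq_zero]
      omega

lemma countP_strip (l : List ℕ) {i : ℕ} (hi : 1 ≤ i) :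
    (strip l).countP (fun x => i ≤ x) = l.countP (fun x => i + 1 ≤ x) := by
  simp only [strip, List.countP_filter, List.countP_map]
  refine List.countP_congr fun x _ => ?_
  simp only [Function.comp_apply, tsub_pos_iff_lt, Bool.and_eq_true, decide_eq_true_eq]
  omega

lemma prod_Icc_one_succ {M : Type*} [CommMonoid M] (f : ℕ → M) (m : ℕ) :
    ∏ i ∈ Finset.Icc 1 (m + 1), f i = f 1 * ∏ i ∈ Finset.Icc 1 m, f (i + 1) := by
  rw [← Finset.mul_prod_Ioc_eq_prod_Icc (by omega), ← Finset.Icc_add_one_left_eq_Ioc,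
    ← Finset.map_add_right_Icc, Finset.prod_map]
  rfl

def hookProduct (l : List ℕ) : ℕ :=
  ∏ i ∈ Finset.Icc 1 l.headI, ((l.headI - i + 1) + l.countP (fun x => i ≤ x) - 1 + 1)

lemma hookProduct_le_cons (s : List ℕ) {c : ℕ} (hc : s.headI ≤ c) :
    hookProduct s ≤ hookProduct (c :: s) := by
  unfold hookProduct
  calc ∏ i ∈ Finset.Icc 1 s.headI, ((s.headI - i + 1) + s.countP (fun x => i ≤ x) - 1 + 1)
      ≤ ∏ i ∈ Finset.Icc 1 s.headI,
          ((c - i + 1) + (c :: s).countP (fun x => i ≤ x) - 1 + 1) := by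
        refine Finset.prod_le_prod' fun i hi => ?_
        have hic : i ≤ c := (Finset.mem_Icc.1 hi).2.trans hc
        rw [List.countP_cons_of_pos (p := fun x => decide (i ≤ x)) (decide_eq_true hic)]
        omega
    _ ≤ ∏ i ∈ Finset.Icc 1 c, ((c - i + 1) + (c :: s).countP (fun x => i ≤ x) - 1 + 1) :=
        Finset.prod_le_prod_of_subset_of_one_le' (Finset.Icc_subset_Icc_right hc)
          fun _ _ _ => by omega

lemma hookProduct_strip_le_strip_cons {a : ℕ} {t : List ℕ} (h : (a :: t).Pairwise (· ≥ ·)) :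
    hookProduct (strip t) ≤ hookProduct (strip (a :: t)) := by
  rcases Nat.lt_or_ge 1 a with ha | ha
  · rw [strip_cons_of_one_lt t ha]
    refine hookProduct_le_cons _ ?_
    rw [headI_strip (List.pairwise_cons.1 h).2]
    cases t with
    | nil => simp
    | cons b u => simpa using Nat.sub_le_sub_right ((List.pairwise_cons.1 h).1 b (by simp)) 1
  · rw [strip_cons_of_le_one t ha]

lemma hookProduct_cons {a : ℕ} {t : List ℕ} (hs : (a :: t).Pairwise (· ≥ ·))
    (hp : ∀ x ∈ a :: t, 0 < x) :
    hookProduct (a :: t) = (a + t.length + 1) * hookProduct (strip (a :: t)) := by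
  obtain ⟨m, rfl⟩ : ∃ m, a = m + 1 := ⟨a - 1, by have := hp a (by simp); omega⟩
  have hlen : ((m + 1) :: t).countP (fun x => 1 ≤ x) = t.length + 1 := by
    rw [List.countP_eq_length.2 fun x hx => decide_eq_true (show 1 ≤ x from hp x hx)]
    simp
  unfold hookProduct
  rw [headI_strip hs, List.headI_cons, Nat.add_sub_cancel, prod_Icc_one_succ, hlen]
  congr 1
  refine Finset.prod_congr rfl fun i hi => ?_
  rw [countP_strip _ (Finset.mem_Icc.1 hi).1]
  omega

lemma abs_eta_cons_le (a : ℕ) (t : List ℕ) :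
    |eta (a :: t)| ≤ |eta (strip t)| + (a + t.length) * |eta (strip (a :: t))| := by
  rw [eta, abs_mul, abs_neg_one_pow, one_mul]
  refine (abs_add_le _ _).trans_eq ?_
  rw [abs_mul, abs_mul, abs_neg_one_pow, one_mul,
    abs_of_nonneg (a := (a + t.length : ℤ)) (by positivity)]

theorem abs_eta_le_hookProduct {l : List ℕ} (hs : l.Pairwise (· ≥ ·)) (hp : ∀ x ∈ l, 0 < x) :
    |eta l| ≤ hookProduct l := by
  induction l using eta.induct with
  | case1 => simp [eta, hookProduct]
  | case2 a t ih_hook ih_col =>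
    have hsub : (hookProduct (strip t) : ℤ) ≤ hookProduct (strip (a :: t)) :=
      mod_cast hookProduct_strip_le_strip_cons hs
    calc |eta (a :: t)| ≤ |eta (strip t)| + (a + t.length) * |eta (strip (a :: t))| :=
          abs_eta_cons_le a t
      _ ≤ hookProduct (strip t) + (a + t.length) * hookProduct (strip (a :: t)) := by
          gcongr
          · exact ih_hook (pairwise_ge_strip (List.pairwise_cons.1 hs).2) fun _ => pos_of_mem_strip
          · exact ih_col (pairwise_ge_strip hs) fun _ => pos_of_mem_strip
      _ ≤ (a + t.length + 1) * hookProduct (strip (a :: t)) := by linarith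
      _ = hookProduct (a :: t) := by rw [hookProduct_cons hs hp]; push_cast; ring

/-- Hook-product bound: with `h_i = (λ₁ - i + 1) + #{j : λ_j ≥ i} - 1` the hook size of
the partition obtained by deleting the first `i-1` columns,
`|η_λ| ≤ ∏_{i=1}^{λ₁} (h_i + 1)`. -/
theorem eta_abs_le_hook_product (n : ℕ) (l : List ℕ) (hl : IsPartition n l) :
    |eta l| ≤ ∏ i ∈ Finset.Icc 1 l.headI,
      (((l.headI - i + 1) + l.countP (fun x => i ≤ x) - 1 + 1 : ℕ) : ℤ) := by
  obtain ⟨hs, hp, -⟩ := hl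
  exact_mod_cast abs_eta_le_hookProduct hs hp
end

section
/- For every a ≥ 1, the two-row rectangular partition (a, a) of 2a satisfies |η_{(a,a)}| ≥ 2·D_a + D_{a−1}. -/
/-!
Write `e a = (-1)^a η_{(a,a)}`. Removing the hook of `(a+1, a+1)` leaves the one-row partition
`(a)`, whose eigenvalue is `D_a`, and removing its first column leaves `(a, a)`; so Renteln's
recurrence reads `e (a+1) = (a+2) e a - D_a`. Feeding the bound for `e a` into it and expanding `D_{a+1}`, the
induction step reduces to `2 (-1)^(a-1) ≤ (a+2) D_{a-1}`, which holds because
`D_m ≥ max 0 ((-1)^m)`. Finally `|η_{(a,a)}| ≥ e a`.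
-/

lemma derange_eq_numDerangements (n : ℕ) : derange n = numDerangements n := by
  induction n with
  | zero => rfl
  | succ n ih =>
    rw [derange, ih, numDerangements_succ, pow_succ]
    ring

lemma derange_nonneg (n : ℕ) : 0 ≤ derange n := by
  rw [derange_eq_numDerangements]
  positivity

lemma neg_one_pow_le_derange : ∀ n : ℕ, (-1) ^ n ≤ derange n
  | 0 => le_rfl
  | n + 1 => by
    have := derange_nonneg n
    rw [derange]
    nlinarith

lemma neg_one_pow_mul_self {R : Type*} [Monoid R] [HasDistribNeg R] (n : ℕ) :
    (-1 : R) ^ n * (-1) ^ n = 1 := by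
  rw [← pow_add, ← two_mul, pow_mul, neg_one_sq, one_pow]

-- For `n = 0` this holds because `strip [1] = []` and `eta [0] = eta [] = 1`.
lemma eta_strip_singleton_succ (n : ℕ) : eta (strip [n + 1]) = eta [n] := by
  rcases n.eq_zero_or_pos with rfl | hn
  · simp [strip, eta]
  · simp [strip, hn]

lemma eta_singleton_s11 (n : ℕ) : eta [n] = derange n := by
  induction n with
  | zero => simp [eta, strip, derange]
  | succ n ih =>
    rw [eta, eta_strip_singleton_succ, ih, derange]
    simp only [strip, List.map_nil, List.filter_nil, List.length_nil, eta]
    push_cast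
    linear_combination ((n + 1 : ℤ) * derange n) * neg_one_pow_mul_self (R := ℤ) (n + 1)

lemma strip_pair_succ {n : ℕ} (hn : 0 < n) : strip [n + 1, n + 1] = [n, n] := by
  simp [strip, hn]

lemma eta_pair_succ {n : ℕ} (hn : 0 < n) :
    (-1) ^ (n + 1) * eta [n + 1, n + 1] = (n + 2) * ((-1) ^ n * eta [n, n]) - derange n := by
  rw [eta, strip_pair_succ hn, eta_strip_singleton_succ, eta_singleton_s11]
  simp only [List.length_cons, List.length_nil, pow_succ]
  push_cast
  linear_combination
    (-derange n + (-1) ^ n * (n + 2) * eta [n, n]) * neg_one_pow_mul_self (R := ℤ) n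

lemma two_mul_derange_add_le_neg_one_pow_mul_eta (m : ℕ) :
    2 * derange (m + 1) + derange m ≤ (-1) ^ (m + 1) * eta [m + 1, m + 1] := by
  induction m with
  | zero => simp [eta, strip, derange]
  | succ m ih =>
    have hD : 2 * (-1) ^ m ≤ ((m : ℤ) + 3) * derange m := by
      nlinarith [neg_one_pow_le_derange m, derange_nonneg m]
    calc 2 * derange (m + 2) + derange (m + 1)
        = ((m : ℤ) + 3) * (2 * derange (m + 1) + derange m) - derange (m + 1)
            - ((m + 3) * derange m - 2 * (-1) ^ m) := by
          rw [derange]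
          push_cast
          ring
      _ ≤ ((m : ℤ) + 3) * (2 * derange (m + 1) + derange m) - derange (m + 1) := by linarith
      _ ≤ ((m : ℤ) + 3) * ((-1) ^ (m + 1) * eta [m + 1, m + 1]) - derange (m + 1) := by gcongr
      _ = (-1) ^ (m + 2) * eta [m + 2, m + 2] := by
          rw [eta_pair_succ (n := m + 1) m.succ_pos]
          push_cast
          ring

/-- For `a ≥ 1`, `|η_{(a,a)}| ≥ 2 D_a + D_{a-1}`. -/
theorem eta_abs_two_row_lower (a : ℕ) (ha : 1 ≤ a) :
    2 * derange a + derange (a - 1) ≤ |eta [a, a]| := by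
  obtain ⟨m, rfl⟩ := Nat.exists_eq_add_of_le' ha
  calc 2 * derange (m + 1) + derange (m + 1 - 1)
      = 2 * derange (m + 1) + derange m := rfl
    _ ≤ (-1) ^ (m + 1) * eta [m + 1, m + 1] := two_mul_derange_add_le_neg_one_pow_mul_eta m
    _ ≤ |eta [m + 1, m + 1]| := (le_abs_self _).trans_eq (by simp [abs_mul])
end
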